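/- arXiv:math/0106191 — 2 statements merged into one kernel-verified Lean document; each statement's English description precedes it below -/
import Mathlib

section
/- Fix n ≥ 1 and work over the field F of rational functions in the 2(n−1) variables q_1,…,q_{n−1},t_1,…,t_{n−1} over ℚ. Let K_n(Q,T) be the matrix indexed by compositions of n with (I,J) entry ∏_{k∈Des(J)} ṽ(I,k), and let K_n(Q,𝟏) be its specialization obtained by substituting t_j = 1 for all j (a matrix over F that is invertible, since its determinant ∏_{m=1}^{n−1}∏_{k=1}^{m}(1−q_k)^{2^{n−1−m}C(m−1,k−1)} is nonzero). Then the product K_n(Q,T)·K_n(Q,𝟏)^{−1} is lower triangular with respect to the order b(I) := ∑_{k∈Des(I)} 2^{n−1−k} on compositions: its (I,J) entry is 0 whenever b(I) < b(J). -/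
/-!
Row `I` of `K_n(Q,T)` is the product function `T ↦ ∏_{k ∈ T} x k` with `x = ṽ(I, ·)`, and every
such function expands in the rows of `K_n(Q,𝟏)`. Going down from the largest element `a`, the pair
`(1, x a)` is `((1 - x a) • (1, c) + (x a - c) • (1, 1)) / (1 - c)`, where `(1, c)` and `(1, 1)` are
the two rows of the `2 × 2` block of `K_n(Q,𝟏)` at `a` and `c = q_{a - #(U ∩ [0, a))}` depends only
on the part of `U` below `a`; hence `K_n(Q,T) = L · K_n(Q,𝟏)` with `L` an explicit product. If `U`
first departs from `Des I` at some `a ∈ U \ Des I`, then `ṽ(I, a) = c` and the factor `x a - c` of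
`L I U` vanishes, which is lower triangularity for `b`. The same expansion applied to the indicator
of `Des I` factors the zeta matrix `[Des J ⊆ Des I]`, which is unitriangular, so `K_n(Q,𝟏)` is
invertible.
-/

open Finset

instance {n : ℕ} : DecidableEq (Composition n) := fun a b =>
  decidable_of_iff (a.blocks = b.blocks) ⟨fun h => Composition.ext h, fun h => congrArg _ h⟩

/-- The descent set of a composition of `n`: the set of proper partial sums
`i₁, i₁+i₂, …, i₁+⋯+i_{ℓ(I)−1}`, a subset of `{1,…,n−1}`. -/
def Des {n : ℕ} (I : Composition n) : Finset ℕ :=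
  (Finset.Ioo 0 I.length).image I.sizeUpTo

/-- `d I k` is the number of descents of `I` that are strictly less than `k`. -/
def d {n : ℕ} (I : Composition n) (k : ℕ) : ℕ :=
  ((Des I).filter (· < k)).card

/-- The field of rational functions over `ℚ` in the independent indeterminates
`q_j = X (false, j)` and `t_i = X (true, i)`. -/
abbrev FQT : Type _ := FractionRing (MvPolynomial (Bool × ℕ) ℚ)

/-- The indeterminate `q_j` in the field of rational functions. -/
noncomputable def qv (j : ℕ) : FQT :=
  algebraMap (MvPolynomial (Bool × ℕ) ℚ) FQT (MvPolynomial.X (false, j))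

/-- The indeterminate `t_i` in the field of rational functions. -/
noncomputable def tv (i : ℕ) : FQT :=
  algebraMap (MvPolynomial (Bool × ℕ) ℚ) FQT (MvPolynomial.X (true, i))

/-- `ṽ(I,k) := t_{1+d(I,k)}` if `k ∈ Des I`, and `q_{k−d(I,k)}` otherwise. -/
noncomputable def vM {n : ℕ} (I : Composition n) (k : ℕ) : FQT :=
  if k ∈ Des I then tv (1 + d I k) else qv (k - d I k)

/-- The multiparameter Kostka matrix `K_n(Q,T)` with `(I,J)` entry `∏_{k ∈ Des J} ṽ(I,k)`. -/
noncomputable def KQT (n : ℕ) : Matrix (Composition n) (Composition n) FQT :=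
  Matrix.of fun I J => ∏ k ∈ Des J, vM I k

/-- `b(I) := ∑_{k ∈ Des I} 2^{n−1−k}`, the standard ordering of compositions. -/
def bOrd {n : ℕ} (I : Composition n) : ℕ :=
  ∑ k ∈ Des I, 2 ^ (n - 1 - k)

/-- The specialization `K_n(Q,𝟏)` of `K_n(Q,T)` at `t_j = 1` for all `j`. -/
noncomputable def KQ1 (n : ℕ) : Matrix (Composition n) (Composition n) FQT :=
  Matrix.of fun I J => ∏ k ∈ Des J, if k ∈ Des I then (1 : FQT) else qv (k - d I k)

theorem Finset.sum_powerset_prod_ite_filter_lt {α R : Type*} [LinearOrder α] [CommSemiring R]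
    (s : Finset α) (f g : α → Finset α → R) (h : α → R)
    (hfg : ∀ a ∈ s, ∀ V, f a V + g a V = h a) :
    ∑ U ∈ s.powerset, ∏ a ∈ s, (if a ∈ U then f a {b ∈ U | b < a} else g a {b ∈ U | b < a})
      = ∏ a ∈ s, h a := by
  induction s using Finset.induction_on_max with
  | empty => simp
  | insert a s hlt ih =>
    have ha : a ∉ s := fun h => lt_irrefl a (hlt a h)
    have hfg' : ∀ b ∈ s, ∀ V, f b V + g b V = h b := fun b hb => hfg b (mem_insert_of_mem hb)
    rw [sum_powerset_insert ha, ← sum_add_distrib, prod_insert ha, ← ih hfg', mul_sum]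
    refine sum_congr rfl fun U hU => ?_
    have haU : a ∉ U := fun h => ha (mem_powerset.1 hU h)
    have hUa : {b ∈ U | b < a} = U := filter_true_of_mem fun b hb => hlt b (mem_powerset.1 hU hb)
    have hiUa : {b ∈ insert a U | b < a} = U := by
      rw [filter_insert, if_neg (lt_irrefl a), hUa]
    have hrest : ∀ b ∈ s, (if b ∈ insert a U then f b {c ∈ insert a U | c < b}
        else g b {c ∈ insert a U | c < b}) =
        if b ∈ U then f b {c ∈ U | c < b} else g b {c ∈ U | c < b} := fun b hb => by
      simp only [filter_insert, if_neg (hlt b hb).not_gt, mem_insert, (hlt b hb).ne, false_or]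
    rw [prod_insert ha, prod_insert ha, if_pos (mem_insert_self a U), if_neg haU, hUa, hiUa,
      prod_congr rfl hrest, ← hfg a (mem_insert_self a s) U, add_mul, add_comm]

section Expansion

variable {K : Type*} [Field K] (q : ℕ → K)

-- `vOne q (Des I) k` is `ṽ(I, k)` at `t = 1`, the factor of the entries of `K_n(Q,𝟏)`.
def vOne (U : Finset ℕ) (k : ℕ) : K :=
  if k ∈ U then 1 else q (k - #{j ∈ U | j < k})

def expansionCoeff (s : Finset ℕ) (x : ℕ → K) (U : Finset ℕ) : K :=
  ∏ a ∈ s, if a ∈ U then (x a - q (a - #{j ∈ U | j < a})) / (1 - q (a - #{j ∈ U | j < a}))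
    else (1 - x a) / (1 - q (a - #{j ∈ U | j < a}))

variable {q}

theorem prod_eq_sum_expansionCoeff_mul (hq : ∀ j, q j ≠ 1) (x : ℕ → K) {s T : Finset ℕ}
    (hT : T ⊆ s) :
    ∏ k ∈ T, x k = ∑ U ∈ s.powerset, expansionCoeff q s x U * ∏ k ∈ T, vOne q U k := by
  have hprod (y : ℕ → K) : ∏ k ∈ T, y k = ∏ a ∈ s, if a ∈ T then y a else 1 := by
    rw [prod_ite_mem, inter_eq_right.2 hT]
  rw [hprod, ← sum_powerset_prod_ite_filter_lt s
    (fun a V => (x a - q (a - #V)) / (1 - q (a - #V)))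
    (fun a V => (1 - x a) / (1 - q (a - #V)) * if a ∈ T then q (a - #V) else 1)]
  · refine sum_congr rfl fun U _ => ?_
    rw [hprod, expansionCoeff, ← prod_mul_distrib]
    refine prod_congr rfl fun a _ => ?_
    by_cases haU : a ∈ U <;> simp [vOne, haU]
  · intro a _ V
    have : 1 - q (a - #V) ≠ 0 := sub_ne_zero.2 (hq _).symm
    split_ifs <;> field_simp <;> ring

theorem exists_mem_notMem_lt_of_expansionCoeff_ne_zero {x : ℕ → K} {s S U : Finset ℕ}
    (hx : ∀ k ∉ S, x k = vOne q S k) (hU : U ⊆ s) (h : expansionCoeff q s x U ≠ 0) :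
    ∀ k ∈ U, k ∉ S → ∃ m ∈ S, m ∉ U ∧ m < k := by
  intro k
  induction k using Nat.strong_induction_on with
  | _ k ih =>
  intro hkU hkS
  by_contra! hnone
  -- no element of `S \ U` lies below `k`, so by induction `S` and `U` agree below `k`, and then
  -- the factor of `expansionCoeff` at `k` vanishes
  have hagree : {j ∈ S | j < k} = {j ∈ U | j < k} := by
    ext j
    simp only [mem_filter, and_congr_left_iff]
    intro hjk
    constructor
    · exact fun hjS => by_contra fun hjU => (hnone j hjS hjU).not_gt hjk
    · intro hjU
      by_contra hjS
      obtain ⟨m, hmS, hmU, hmj⟩ := ih j hjk hjU hjS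
      exact (hnone m hmS hmU).not_gt (hmj.trans hjk)
  refine h (prod_eq_zero (hU hkU) ?_)
  rw [if_pos hkU, hx k hkS, vOne, if_neg hkS, hagree, sub_self, zero_div]

end Expansion

theorem sum_two_pow_sub_le_of_forall_exists_lt {N : ℕ} {S U : Finset ℕ} (hS : ∀ k ∈ S, k ≤ N)
    (hU : ∀ k ∈ U, k ≤ N) (h : ∀ k ∈ U, k ∉ S → ∃ m ∈ S, m ∉ U ∧ m < k) :
    ∑ k ∈ U, 2 ^ (N - k) ≤ ∑ k ∈ S, 2 ^ (N - k) := by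
  have hinj {A : Finset ℕ} (hA : ∀ k ∈ A, k ≤ N) : Set.InjOn (N - ·) A := fun i hi j hj hij => by
    have := hA i hi; have := hA j hj; simp only at hij; omega
  rw [← sum_image (g := (N - ·)) (f := (2 ^ ·)) (hinj hU), ← sum_image (f := (2 ^ ·)) (hinj hS),
    geomSum_le_geomSum_iff_toColex_le_toColex le_rfl, Colex.toColex_le_toColex]
  rintro _ ha haS
  obtain ⟨k, hkU, rfl⟩ := mem_image.1 ha
  obtain ⟨m, hmS, hmU, hmk⟩ := h k hkU fun hkS => haS (mem_image_of_mem _ hkS)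
  refine ⟨N - m, mem_image_of_mem _ hmS, ?_, by omega⟩
  intro hm
  obtain ⟨m', hm'U, he⟩ := mem_image.1 hm
  have := hU m' hm'U; have := hS m hmS
  exact hmU (by rwa [show m = m' by omega])

theorem qv_ne_one (j : ℕ) : qv j ≠ 1 := by
  intro h
  have hX : (MvPolynomial.X (false, j) : MvPolynomial (Bool × ℕ) ℚ) = 1 :=
    IsFractionRing.injective _ FQT (by rw [map_one]; exact h)
  simpa using congrArg MvPolynomial.constantCoeff hX

namespace Composition

variable {n : ℕ}

theorem Des_subset_Ioo (I : Composition n) : Des I ⊆ Ioo 0 n := by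
  intro k hk
  obtain ⟨i, hi, rfl⟩ := mem_image.1 hk
  obtain ⟨h0, hl⟩ := mem_Ioo.1 hi
  have h1 : 0 < I.sizeUpTo 1 := by simpa using I.sizeUpTo_strict_mono (i := 0) (by omega)
  have h2 : I.sizeUpTo 1 ≤ I.sizeUpTo i := I.monotone_sizeUpTo h0
  have h3 : I.sizeUpTo i < I.sizeUpTo (i + 1) := I.sizeUpTo_strict_mono hl
  exact mem_Ioo.2 ⟨by omega, h3.trans_le (I.sizeUpTo_le _)⟩

theorem mem_boundaries_iff_mem_Des (I : Composition n) (j : Fin (n + 1)) :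
    j ∈ I.boundaries ↔ (j : ℕ) = 0 ∨ (j : ℕ) = n ∨ (j : ℕ) ∈ Des I := by
  have hb (i : Fin (I.length + 1)) : (I.boundary i : ℕ) = I.sizeUpTo i := rfl
  simp only [boundaries, mem_map, mem_univ, true_and, RelEmbedding.coe_toEmbedding, Fin.ext_iff,
    hb, Des, mem_image, mem_Ioo]
  constructor
  · rintro ⟨i, hi⟩
    rw [← hi]
    rcases Nat.eq_zero_or_pos (i : ℕ) with h0 | h0
    · exact Or.inl (by rw [h0, sizeUpTo_zero])
    · rcases (Nat.lt_succ_iff.1 i.isLt).eq_or_lt with hl | hl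
      · exact Or.inr (Or.inl (by rw [hl, sizeUpTo_length]))
      · exact Or.inr (Or.inr ⟨i, ⟨h0, hl⟩, rfl⟩)
  · rintro (h | h | ⟨i, ⟨_, hi⟩, h⟩)
    · exact ⟨0, by simpa using h.symm⟩
    · exact ⟨Fin.last _, by simp [h]⟩
    · exact ⟨⟨i, by omega⟩, h⟩

theorem Des_injective : Function.Injective (Des : Composition n → Finset ℕ) := by
  intro I J h
  refine (compositionEquiv n).injective (CompositionAsSet.ext ?_)
  ext j
  simp only [compositionEquiv, Equiv.coe_fn_mk, toCompositionAsSet_boundaries,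
    mem_boundaries_iff_mem_Des, h]

theorem image_Des_univ : (univ : Finset (Composition n)).image Des = (Ioo 0 n).powerset := by
  refine eq_of_subset_of_card_le (fun U hU => ?_) ?_
  · obtain ⟨I, _, rfl⟩ := mem_image.1 hU
    exact mem_powerset.2 I.Des_subset_Ioo
  · rw [card_powerset, card_image_of_injective _ Des_injective, card_univ, composition_card,
      Nat.card_Ioo, Nat.sub_zero]

theorem sum_Des_eq_sum_powerset {M : Type*} [AddCommMonoid M] (f : Finset ℕ → M) :
    ∑ I : Composition n, f (Des I) = ∑ U ∈ (Ioo 0 n).powerset, f U := by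
  rw [← image_Des_univ, sum_image fun I _ J _ h => Des_injective h]

end Composition

theorem of_prod_Des_eq_mul_KQ1 {n : ℕ} (x : Composition n → ℕ → FQT) :
    Matrix.of (fun I J : Composition n => ∏ k ∈ Des J, x I k) =
      Matrix.of (fun I J : Composition n => expansionCoeff qv (Ioo 0 n) (x I) (Des J)) *
        KQ1 n := by
  ext I J
  rw [Matrix.mul_apply, Matrix.of_apply,
    prod_eq_sum_expansionCoeff_mul qv_ne_one (x I) J.Des_subset_Ioo,
    ← Composition.sum_Des_eq_sum_powerset]
  rfl

theorem det_of_prod_mem_Des {R : Type*} [CommRing R] (n : ℕ) :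
    (Matrix.of fun I J : Composition n => ∏ k ∈ Des J, if k ∈ Des I then (1 : R) else 0).det =
      1 := by
  let _ : LinearOrder (Composition n) :=
    LinearOrder.lift' (fun I => toColex (Des I)) (toColex.injective.comp Composition.Des_injective)
  rw [Matrix.det_of_isLowerTriangular]
  · exact prod_eq_one fun I _ => (Matrix.of_apply _ I I).trans (prod_eq_one fun k hk => if_pos hk)
  · intro I J hIJ
    obtain ⟨k, hkJ, hkI⟩ :=
      not_subset.1 fun hsub => (Colex.toColex_le_toColex_of_subset hsub).not_gt hIJ
    exact prod_eq_zero hkJ (if_neg hkI)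

theorem det_KQ1_ne_zero (n : ℕ) : (KQ1 n).det ≠ 0 := by
  intro h
  have hzeta := of_prod_Des_eq_mul_KQ1 (n := n) fun I k => if k ∈ Des I then 1 else 0
  have := congrArg Matrix.det hzeta
  rw [det_of_prod_mem_Des, Matrix.det_mul, h, mul_zero] at this
  exact one_ne_zero this

theorem bOrd_le_of_expansionCoeff_ne_zero {n : ℕ} {I J : Composition n}
    (h : expansionCoeff qv (Ioo 0 n) (vM I) (Des J) ≠ 0) : bOrd J ≤ bOrd I := by
  have hle (K : Composition n) : ∀ k ∈ Des K, k ≤ n - 1 := fun k hk => by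
    have := mem_Ioo.1 (K.Des_subset_Ioo hk); omega
  refine sum_two_pow_sub_le_of_forall_exists_lt (hle I) (hle J)
    (exists_mem_notMem_lt_of_expansionCoeff_ne_zero (fun k hk => ?_) J.Des_subset_Ioo h)
  simp [vM, vOne, hk, d]

theorem KQT_mul_KQ1_inv_lowerTriangular_general {n : ℕ} :
    (KQ1 n).det ≠ 0 ∧
    ∀ I J : Composition n, bOrd I < bOrd J → (KQT n * (KQ1 n)⁻¹) I J = 0 := by
  refine ⟨det_KQ1_ne_zero n, fun I J hIJ => ?_⟩
  have hKQT : KQT n = Matrix.of (fun I J => ∏ k ∈ Des J, vM I k) := rfl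
  rw [hKQT, of_prod_Des_eq_mul_KQ1, Matrix.mul_assoc,
    Matrix.mul_nonsing_inv _ (isUnit_iff_ne_zero.2 (det_KQ1_ne_zero n)), Matrix.mul_one,
    Matrix.of_apply]
  by_contra h
  exact (bOrd_le_of_expansionCoeff_ne_zero h).not_gt hIJ

/-- `K_n(Q,𝟏)` is invertible, and `K_n(Q,T)·K_n(Q,𝟏)⁻¹` is lower triangular with respect to
the order `b(I) = ∑_{k ∈ Des I} 2^{n−1−k}` on compositions: its `(I,J)` entry vanishes
whenever `b(I) < b(J)`. -/
theorem KQT_mul_KQ1_inv_lowerTriangular {n : ℕ} (hn : 1 ≤ n) :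
    (KQ1 n).det ≠ 0 ∧
    ∀ I J : Composition n, bOrd I < bOrd J → (KQT n * (KQ1 n)⁻¹) I J = 0 :=
  KQT_mul_KQ1_inv_lowerTriangular_general
end

section
/- Fix n ≥ 1 and work over the field F of rational functions in the 2(n−1) variables q_1,…,q_{n−1},t_1,…,t_{n−1} over ℚ. Let K_n(Q,T) be the matrix indexed by compositions of n with (I,J) entry ∏_{k∈Des(J)} ṽ(I,k), and let K_n(𝟏,T) be its specialization obtained by substituting q_j = 1 for all j (a matrix over F that is invertible, since its determinant ∏_{m=1}^{n−1}∏_{k=1}^{m}(t_{m+1−k}−1)^{2^{n−1−m}C(m−1,k−1)} is nonzero). Then the product K_n(Q,T)·K_n(𝟏,T)^{−1} is upper triangular with respect to the order b(I) := ∑_{k∈Des(I)} 2^{n−1−k} on compositions: its (I,J) entry is 0 whenever b(I) > b(J). -/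
open Finset

/-- The specialization `K_n(𝟏,T)` of `K_n(Q,T)` at `q_j = 1` for all `j`. -/
noncomputable def K1T (n : ℕ) : Matrix (Composition n) (Composition n) FQT :=
  Matrix.of fun I J => ∏ k ∈ Des J, if k ∈ Des I then tv (1 + d I k) else (1 : FQT)

namespace KAux



def dd {m : ℕ} (S : Finset (Fin m)) (k : Fin m) : ℕ := (S.filter (· < k)).card

def bb {m : ℕ} (S : Finset (Fin m)) : ℕ := ∑ k ∈ S, 2 ^ (m - 1 - k.val)

noncomputable def MQ (m : ℕ) (q t : ℕ → FQT) :
    Matrix (Finset (Fin m)) (Finset (Fin m)) FQT :=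
  Matrix.of fun S T => ∏ k ∈ T, if k ∈ S then t (1 + dd S k) else q (k.val + 1 - dd S k)

def pIn {m : ℕ} (S : Finset (Fin m)) : Finset (Fin (m + 1)) :=
  insert 0 (S.map (Fin.succEmb m))

def pOut {m : ℕ} (S : Finset (Fin m)) : Finset (Fin (m + 1)) :=
  S.map (Fin.succEmb m)

lemma zero_notMem_map {m : ℕ} (S : Finset (Fin m)) : (0 : Fin (m+1)) ∉ S.map (Fin.succEmb m) := by
  simp only [mem_map, Fin.succEmb]
  rintro ⟨x, -, hx⟩
  exact Fin.succ_ne_zero x hx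

lemma mem_pIn_succ {m : ℕ} (S : Finset (Fin m)) (k : Fin m) : k.succ ∈ pIn S ↔ k ∈ S := by
  simp [pIn, Fin.succEmb, Fin.succ_ne_zero, Fin.succ_injective m |>.eq_iff]

lemma mem_pOut_succ {m : ℕ} (S : Finset (Fin m)) (k : Fin m) : k.succ ∈ pOut S ↔ k ∈ S := by
  simp [pOut, Fin.succEmb, Fin.succ_injective m |>.eq_iff]

lemma zero_mem_pIn {m : ℕ} (S : Finset (Fin m)) : (0 : Fin (m+1)) ∈ pIn S := mem_insert_self _ _
lemma zero_notMem_pOut {m : ℕ} (S : Finset (Fin m)) : (0 : Fin (m+1)) ∉ pOut S :=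
  zero_notMem_map S

lemma dd_le {m : ℕ} (S : Finset (Fin m)) (k : Fin m) : dd S k ≤ k.val := by
  calc (S.filter (· < k)).card ≤ (Finset.Iio k).card := by
        apply Finset.card_le_card; intro x hx; simp at hx ⊢; exact hx.2
    _ = k.val := by simp

lemma dd_zero {m : ℕ} (S : Finset (Fin (m+1))) : dd S 0 = 0 := by
  simp only [dd]
  rw [Finset.card_eq_zero, Finset.filter_eq_empty_iff]
  intro x _; simp [Fin.lt_def]

lemma filter_lt_succ_map {m : ℕ} (S : Finset (Fin m)) (k : Fin m) :
    (S.map (Fin.succEmb m)).filter (· < k.succ) = (S.filter (· < k)).map (Fin.succEmb m) := by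
  rw [Finset.filter_map]
  congr 1
  apply Finset.filter_congr
  intro x _
  simp [Fin.succEmb, Fin.succ_lt_succ_iff]

lemma dd_pIn_succ {m : ℕ} (S : Finset (Fin m)) (k : Fin m) :
    dd (pIn S) k.succ = 1 + dd S k := by
  unfold dd pIn
  rw [Finset.filter_insert, if_pos (Fin.succ_pos k), Finset.card_insert_of_notMem
    (fun h => zero_notMem_map S (Finset.mem_of_mem_filter _ h)), filter_lt_succ_map,
    Finset.card_map]
  omega

lemma dd_pOut_succ {m : ℕ} (S : Finset (Fin m)) (k : Fin m) :
    dd (pOut S) k.succ = dd S k := by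
  unfold dd pOut
  rw [filter_lt_succ_map, Finset.card_map]


noncomputable def eB (m : ℕ) : (Finset (Fin m)) ⊕ (Finset (Fin m)) ≃ Finset (Fin (m+1)) where
  toFun := Sum.elim pIn pOut
  invFun S := if (0 : Fin (m+1)) ∈ S then Sum.inl (S.preimage Fin.succ (Fin.succ_injective m).injOn)
              else Sum.inr (S.preimage Fin.succ (Fin.succ_injective m).injOn)
  left_inv := by
    rintro (S | S)
    · dsimp only [Sum.elim_inl]
      have h : (0 : Fin (m+1)) ∈ pIn S := mem_insert_self _ _
      rw [if_pos h]
      congr 1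
      ext x
      simp [pIn, Finset.mem_preimage, Fin.succEmb, Fin.succ_ne_zero,
        (Fin.succ_injective m).eq_iff]
    · dsimp only [Sum.elim_inr]
      have h : (0 : Fin (m+1)) ∉ pOut S := zero_notMem_map S
      rw [if_neg h]
      congr 1
      ext x
      simp [pOut, Finset.mem_preimage, Fin.succEmb, (Fin.succ_injective m).eq_iff]
  right_inv := by
    intro S
    by_cases h0 : (0 : Fin (m+1)) ∈ S
    · dsimp only
      rw [if_pos h0]; dsimp only [Sum.elim_inl]
      ext x
      rcases Fin.eq_zero_or_eq_succ x with rfl | ⟨y, rfl⟩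
      · simpa [pIn] using h0
      · simp [pIn, Fin.succEmb, Fin.succ_ne_zero, Finset.mem_preimage,
          (Fin.succ_injective m).eq_iff]
    · dsimp only
      rw [if_neg h0]; dsimp only [Sum.elim_inr]
      ext x
      rcases Fin.eq_zero_or_eq_succ x with rfl | ⟨y, rfl⟩
      · simp [pOut, Fin.succEmb, Fin.succ_ne_zero, h0]
      · simp [pOut, Fin.succEmb, Finset.mem_preimage, (Fin.succ_injective m).eq_iff]


lemma MQ_pIn_pOut {m : ℕ} (q t : ℕ → FQT) (S T : Finset (Fin m)) :
    MQ (m+1) q t (pIn S) (pOut T) = MQ m q (fun i => t (i+1)) S T := by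
  unfold MQ pOut
  simp only [Matrix.of_apply]
  rw [Finset.prod_map]
  apply Finset.prod_congr rfl
  intro j _
  have e : (Fin.succEmb m) j = j.succ := rfl
  show (if (j.succ ∈ pIn S) then _ else _) = _
  rw [e]
  by_cases h : j ∈ S
  · rw [if_pos ((mem_pIn_succ S j).mpr h), if_pos h, dd_pIn_succ]
    congr 1
    omega
  · rw [if_neg (fun hc => h ((mem_pIn_succ S j).mp hc)), if_neg h, dd_pIn_succ]
    congr 1
    have := dd_le S j
    simp only [Fin.val_succ]
    omega

lemma MQ_pIn_pIn {m : ℕ} (q t : ℕ → FQT) (S T : Finset (Fin m)) :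
    MQ (m+1) q t (pIn S) (pIn T) = t 1 * MQ m q (fun i => t (i+1)) S T := by
  rw [← MQ_pIn_pOut q t S T]
  unfold MQ
  simp only [Matrix.of_apply]
  show ∏ k ∈ pIn T, _ = _
  unfold pIn
  rw [Finset.prod_insert (zero_notMem_map T)]
  congr 1
  rw [if_pos (mem_insert_self _ _ : (0:Fin (m+1)) ∈ pIn S), dd_zero]

lemma MQ_pOut_pOut {m : ℕ} (q t : ℕ → FQT) (S T : Finset (Fin m)) :
    MQ (m+1) q t (pOut S) (pOut T) = MQ m (fun j => q (j+1)) t S T := by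
  unfold MQ pOut
  simp only [Matrix.of_apply]
  rw [Finset.prod_map]
  apply Finset.prod_congr rfl
  intro j _
  have e : (Fin.succEmb m) j = j.succ := rfl
  show (if (j.succ ∈ pOut S) then _ else _) = _
  rw [e]
  have e2 : (map (Fin.succEmb m) S) = pOut S := rfl
  rw [e2]
  by_cases h : j ∈ S
  · rw [if_pos ((mem_pOut_succ S j).mpr h), if_pos h, dd_pOut_succ]
  · rw [if_neg (fun hc => h ((mem_pOut_succ S j).mp hc)), if_neg h, dd_pOut_succ]
    congr 1
    have := dd_le S j
    simp only [Fin.val_succ]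
    omega

lemma MQ_pOut_pIn {m : ℕ} (q t : ℕ → FQT) (S T : Finset (Fin m)) :
    MQ (m+1) q t (pOut S) (pIn T) = q 1 * MQ m (fun j => q (j+1)) t S T := by
  rw [← MQ_pOut_pOut q t S T]
  unfold MQ
  simp only [Matrix.of_apply]
  show ∏ k ∈ pIn T, _ = _
  unfold pIn
  rw [Finset.prod_insert (zero_notMem_map T)]
  congr 1
  have h : (0:Fin (m+1)) ∉ pOut S := zero_notMem_map S
  rw [if_neg h, dd_zero]
  norm_num


noncomputable def M1 (m : ℕ) (t : ℕ → FQT) := MQ m (fun _ => 1) t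

lemma bb_pOut {m : ℕ} (S : Finset (Fin m)) : bb (pOut S) = bb S := by
  unfold bb pOut
  rw [Finset.sum_map]
  apply Finset.sum_congr rfl
  intro j _
  have e : ((Fin.succEmb m) j).val = j.val + 1 := rfl
  rw [e]
  congr 1
  omega

lemma bb_pIn {m : ℕ} (S : Finset (Fin m)) : bb (pIn S) = 2 ^ m + bb S := by
  unfold pIn
  rw [show bb (insert 0 (S.map (Fin.succEmb m))) = _ from rfl]
  unfold bb
  rw [Finset.sum_insert (zero_notMem_map S)]
  have : (2:ℕ) ^ (m + 1 - 1 - (0:Fin (m+1)).val) = 2 ^ m := by norm_num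
  rw [this]
  congr 1
  have := bb_pOut S
  unfold bb pOut at this
  convert this using 2

lemma sum_two_pow (m : ℕ) : ∑ i ∈ Finset.range m, 2 ^ i = 2 ^ m - 1 := by
  induction m with
  | zero => simp
  | succ m ih => rw [Finset.sum_range_succ, ih]; have := Nat.one_le_two_pow (n := m); omega

lemma bb_lt {m : ℕ} (S : Finset (Fin m)) : bb S < 2 ^ m := by
  have h1 : bb S ≤ ∑ k : Fin m, 2 ^ (m - 1 - k.val) :=
    Finset.sum_le_sum_of_subset (Finset.subset_univ S)
  have h2 : ∑ k : Fin m, 2 ^ (m - 1 - k.val) = 2 ^ m - 1 := by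
    rw [Fin.sum_univ_eq_sum_range (fun i => 2 ^ (m - 1 - i)) m,
      Finset.sum_range_reflect (fun i => 2 ^ i) m, sum_two_pow]
  have := Nat.one_le_two_pow (n := m)
  omega

lemma MQ_submatrix (m : ℕ) (q t : ℕ → FQT) :
    (MQ (m+1) q t).submatrix (eB m) (eB m) =
      Matrix.fromBlocks (t 1 • MQ m q (fun i => t (i+1))) (MQ m q (fun i => t (i+1)))
        (q 1 • MQ m (fun j => q (j+1)) t) (MQ m (fun j => q (j+1)) t) := by
  ext i j
  rcases i with S | S <;> rcases j with T | T <;>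
    simp [eB, MQ_pIn_pIn, MQ_pIn_pOut, MQ_pOut_pIn, MQ_pOut_pOut, Matrix.smul_apply,
      smul_eq_mul]

lemma submatrix_inj {X Y : Matrix (Finset (Fin (m+1))) (Finset (Fin (m+1))) FQT}
    (h : X.submatrix (eB m) (eB m) = Y.submatrix (eB m) (eB m)) : X = Y := by
  ext i j
  have := congrFun (congrFun h ((eB m).symm i)) ((eB m).symm j)
  simpa [Matrix.submatrix_apply, Equiv.apply_symm_apply] using this

set_option maxHeartbeats 2000000 in
theorem main (m : ℕ) (q t : ℕ → FQT) (ht : ∀ i, t (i+1) ≠ 1) :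
    (M1 m t).det ≠ 0 ∧ ∃ U : Matrix (Finset (Fin m)) (Finset (Fin m)) FQT,
      MQ m q t = U * M1 m t ∧ ∀ S T, bb T < bb S → U S T = 0 := by
  induction m generalizing q t with
  | zero =>
    have hS : ∀ S : Finset (Fin 0), S = ∅ := fun S => Finset.eq_empty_of_isEmpty S
    haveI : Unique (Finset (Fin 0)) := ⟨⟨∅⟩, hS⟩
    have hprod : ∀ (S : Finset (Fin 0)) (f : Fin 0 → FQT), ∏ k ∈ S, f k = 1 := by
      intro S f; rw [hS S]; exact Finset.prod_empty
    constructor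
    · rw [Matrix.det_unique]
      show (∏ k ∈ _, _) ≠ 0
      rw [hprod]
      exact one_ne_zero
    · refine ⟨1, ?_, ?_⟩
      · rw [Matrix.one_mul]
        ext S T
        show (∏ k ∈ T, _) = (∏ k ∈ T, _)
        rw [hprod, hprod]
      · intro S T h
        rw [hS S, hS T] at h
        exact absurd h (lt_irrefl _)
  | succ m ih =>
    obtain ⟨hdetA, UA, hUA, hUAtri⟩ := ih q (fun i => t (i+1)) (fun i => ht (i+1))
    obtain ⟨hdetB, UB, hUB, hUBtri⟩ := ih (fun j => q (j+1)) t ht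
    set A := M1 m (fun i => t (i+1)) with hA
    set B := M1 m t with hB
    set At := MQ m q (fun i => t (i+1)) with hAt
    set Bt := MQ m (fun j => q (j+1)) t with hBt
    have ht1 : t 1 - 1 ≠ 0 := sub_ne_zero_of_ne (ht 0)
    have hAunit : IsUnit A.det := isUnit_iff_ne_zero.mpr hdetA
    -- block forms
    have hM1block : (M1 (m+1) t).submatrix (eB m) (eB m) =
        Matrix.fromBlocks (t 1 • A) A B B := by
      rw [M1, MQ_submatrix]
      rw [one_smul]
      rfl
    have hMQblock : (MQ (m+1) q t).submatrix (eB m) (eB m) =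
        Matrix.fromBlocks (t 1 • At) At (q 1 • Bt) Bt := MQ_submatrix m q t
    -- determinant
    have hcolop : Matrix.fromBlocks (t 1 • A) A B B =
        Matrix.fromBlocks ((t 1 - 1) • A) A 0 B *
          Matrix.fromBlocks (1 : Matrix _ _ FQT) 0 (1 : Matrix _ _ FQT) 1 := by
      have hsa : (t 1 - 1) • A + A = t 1 • A := by
        nth_rewrite 2 [← one_smul FQT A]
        rw [← add_smul]
        norm_num
      rw [Matrix.fromBlocks_multiply]
      simp only [Matrix.mul_one, Matrix.mul_zero, Matrix.zero_mul, zero_add, add_zero, hsa]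
    have hdet : (M1 (m+1) t).det ≠ 0 := by
      rw [← Matrix.det_submatrix_equiv_self (eB m), hM1block, hcolop, Matrix.det_mul,
        Matrix.det_fromBlocks_zero₂₁, Matrix.det_fromBlocks_zero₁₂, Matrix.det_one,
        Matrix.det_smul]
      simp only [one_mul, mul_one]
      exact mul_ne_zero (mul_ne_zero (pow_ne_zero _ ht1) hdetA) hdetB
    refine ⟨hdet, ?_⟩
    -- the triangular factor
    set c : FQT := (q 1 - 1) * (t 1 - 1)⁻¹ with hc
    have hscal : c * t 1 + (1 - c) = q 1 := by
      rw [hc]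
      field_simp
      ring
    set U' : Matrix ((Finset (Fin m)) ⊕ (Finset (Fin m))) ((Finset (Fin m)) ⊕ (Finset (Fin m))) FQT :=
      Matrix.fromBlocks UA 0 (c • (Bt * A⁻¹)) ((1 - c) • UB) with hU'
    have key : U' * Matrix.fromBlocks (t 1 • A) A B B =
        Matrix.fromBlocks (t 1 • At) At (q 1 • Bt) Bt := by
      have hBtA : Bt * A⁻¹ * A = Bt := by
        rw [Matrix.mul_assoc, Matrix.nonsing_inv_mul A hAunit, Matrix.mul_one]
      have h11 : UA * (t 1 • A) + 0 * B = t 1 • At := by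
        rw [Matrix.zero_mul, add_zero, Matrix.mul_smul, ← hUA]
      have h12 : UA * A + 0 * B = At := by
        rw [Matrix.zero_mul, add_zero, ← hUA]
      have h21 : (c • (Bt * A⁻¹)) * (t 1 • A) + ((1 - c) • UB) * B = q 1 • Bt := by
        rw [Matrix.smul_mul, Matrix.mul_smul, hBtA, Matrix.smul_mul, ← hUB, smul_smul,
          ← add_smul, hscal]
      have h22 : (c • (Bt * A⁻¹)) * A + ((1 - c) • UB) * B = Bt := by
        rw [Matrix.smul_mul, hBtA, Matrix.smul_mul, ← hUB, ← add_smul]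
        have hone : c + (1 - c) = 1 := by ring
        rw [hone, one_smul]
      rw [hU', Matrix.fromBlocks_multiply, h11, h12, h21, h22]
    refine ⟨U'.submatrix (eB m).symm (eB m).symm, ?_, ?_⟩
    · apply submatrix_inj (m := m)
      rw [← Matrix.submatrix_mul_equiv (U'.submatrix (eB m).symm (eB m).symm) (M1 (m+1) t)
        (eB m) (eB m) (eB m), Matrix.submatrix_submatrix, Equiv.symm_comp_self,
        Matrix.submatrix_id_id, hM1block, hMQblock, key]
    · intro S T hlt
      rw [Matrix.submatrix_apply]
      have hS := (eB m).apply_symm_apply S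
      have hT := (eB m).apply_symm_apply T
      rcases hS' : (eB m).symm S with S0 | S0 <;> rcases hT' : (eB m).symm T with T0 | T0
      · -- both pIn
        have hbS : bb S = 2 ^ m + bb S0 := by
          rw [← hS, hS']; exact bb_pIn S0
        have hbT : bb T = 2 ^ m + bb T0 := by
          rw [← hT, hT']; exact bb_pIn T0
        rw [hU']
        show UA S0 T0 = 0
        exact hUAtri S0 T0 (by omega)
      · rw [hU']
        show (0 : Matrix _ _ FQT) S0 T0 = 0
        rfl
      · -- S out, T in : impossible
        have hbS : bb S = bb S0 := by rw [← hS, hS']; exact bb_pOut S0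
        have hbT : bb T = 2 ^ m + bb T0 := by rw [← hT, hT']; exact bb_pIn T0
        have := bb_lt S0
        omega
      · have hbS : bb S = bb S0 := by rw [← hS, hS']; exact bb_pOut S0
        have hbT : bb T = bb T0 := by rw [← hT, hT']; exact bb_pOut T0
        rw [hU']
        show ((1 - c) • UB) S0 T0 = 0
        rw [Matrix.smul_apply, hUBtri S0 T0 (by omega), smul_zero]

end KAux

noncomputable def eC (n : ℕ) : Composition n ≃ Finset (Fin (n-1)) :=
  (compositionEquiv n).trans (compositionAsSetEquiv n)

lemma mem_boundaries {n : ℕ} (I : Composition n) (x : Fin (n+1)) :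
    x ∈ I.boundaries ↔ ∃ j : Fin (I.length + 1), I.sizeUpTo j.val = x.val := by
  simp [Composition.boundaries, Composition.boundary, Fin.ext_iff]

lemma mem_Des {n : ℕ} (I : Composition n) (k : ℕ) :
    k ∈ Des I ↔ ∃ j, 0 < j ∧ j < I.length ∧ I.sizeUpTo j = k := by
  simp [Des, Finset.mem_image, Finset.mem_Ioo]
  tauto

lemma mem_eC {n : ℕ} (I : Composition n) (i : Fin (n-1)) :
    i ∈ eC n I ↔ (i.val + 1) ∈ Des I := by
  have hblock : (eC n I : Finset (Fin (n-1))) = compositionAsSetEquiv n I.toCompositionAsSet := rfl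
  rw [hblock]
  simp only [compositionAsSetEquiv, Equiv.coe_fn_mk, Set.mem_toFinset, Set.mem_setOf_eq]
  have hb : I.toCompositionAsSet.boundaries = I.boundaries := rfl
  rw [hb, mem_boundaries, mem_Des]
  have hin : i.val < n - 1 := i.isLt
  constructor
  · rintro ⟨j, hj⟩
    have hj' : I.sizeUpTo j.val = 1 + i.val := hj
    refine ⟨j.val, ?_, ?_, by omega⟩
    · rcases Nat.eq_zero_or_pos j.val with h0 | h0
      · exfalso; rw [h0] at hj'; simp at hj'; omega
      · exact h0
    · by_contra hle
      push_neg at hle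
      have : I.sizeUpTo j.val = n := I.sizeUpTo_ofLength_le _ hle
      omega
  · rintro ⟨j, hj0, hjl, hjs⟩
    refine ⟨⟨j, by omega⟩, ?_⟩
    show I.sizeUpTo j = 1 + i.val
    omega

lemma Des_bounds {n : ℕ} (I : Composition n) {k : ℕ} (hk : k ∈ Des I) : 0 < k ∧ k < n := by
  rw [mem_Des] at hk
  obtain ⟨j, hj0, hjl, rfl⟩ := hk
  constructor
  · have h1 : I.sizeUpTo 0 < I.sizeUpTo 1 := I.sizeUpTo_strict_mono (by omega)
    have h2 : I.sizeUpTo 1 ≤ I.sizeUpTo j := I.monotone_sizeUpTo (by omega)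
    simpa using lt_of_lt_of_le h1 h2
  · have h1 : I.sizeUpTo j < I.sizeUpTo (j+1) := I.sizeUpTo_strict_mono hjl
    exact lt_of_lt_of_le h1 (I.sizeUpTo_le _)

lemma val_succ_injective {n : ℕ} : Function.Injective (fun i : Fin (n-1) => i.val + 1) := by
  intro a b h
  simp only [add_left_inj] at h
  exact Fin.val_injective h

lemma Des_eq_image {n : ℕ} (I : Composition n) :
    Des I = (eC n I).image (fun i => i.val + 1) := by
  ext k
  rw [Finset.mem_image]
  constructor
  · intro hk
    have hb := Des_bounds I hk
    refine ⟨⟨k - 1, by omega⟩, ?_, show k - 1 + 1 = k by omega⟩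
    rw [mem_eC]
    simpa [Nat.sub_add_cancel hb.1] using hk
  · rintro ⟨i, hi, rfl⟩
    exact (mem_eC I i).mp hi

lemma d_eq {n : ℕ} (I : Composition n) (i : Fin (n-1)) :
    d I (i.val + 1) = KAux.dd (eC n I) i := by
  rw [d, Des_eq_image, Finset.filter_image, Finset.card_image_of_injective _ val_succ_injective, KAux.dd]
  congr 1
  apply Finset.filter_congr
  intro x _
  show x.val + 1 < i.val + 1 ↔ x < i
  rw [Fin.lt_def]
  omega

lemma tv_ne_one (i : ℕ) : tv i ≠ 1 := by
  intro h
  rw [tv, show (1 : FQT) = algebraMap (MvPolynomial (Bool × ℕ) ℚ) FQT 1 from (map_one _).symm] at h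
  have := IsFractionRing.injective (MvPolynomial (Bool × ℕ) ℚ) FQT h
  have h0 := congrArg MvPolynomial.constantCoeff this
  simp at h0


lemma hinj' {n : ℕ} : Function.Injective (fun i : Fin (n-1) => i.val + 1) :=
  val_succ_injective

lemma KQT_eq {n : ℕ} : KQT n = (KAux.MQ (n-1) qv tv).submatrix (eC n) (eC n) := by
  ext I J
  rw [Matrix.submatrix_apply]
  show (∏ k ∈ Des J, vM I k) = ∏ k ∈ eC n J,
    (if k ∈ eC n I then tv (1 + KAux.dd (eC n I) k) else qv (k.val + 1 - KAux.dd (eC n I) k))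
  rw [Des_eq_image J, Finset.prod_image (fun a _ b _ h => val_succ_injective h)]
  apply Finset.prod_congr rfl
  intro i _
  show vM I (i.val + 1) = _
  unfold vM
  rw [d_eq]
  by_cases h : i ∈ eC n I
  · rw [if_pos ((mem_eC I i).mp h), if_pos h]
  · rw [if_neg (fun hc => h ((mem_eC I i).mpr hc)), if_neg h]

lemma K1T_eq {n : ℕ} : K1T n = (KAux.M1 (n-1) tv).submatrix (eC n) (eC n) := by
  ext I J
  rw [Matrix.submatrix_apply]
  show (∏ k ∈ Des J, if k ∈ Des I then tv (1 + d I k) else (1:FQT)) = ∏ k ∈ eC n J,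
    (if k ∈ eC n I then tv (1 + KAux.dd (eC n I) k) else (fun _ => (1:FQT)) (k.val + 1 - KAux.dd (eC n I) k))
  rw [Des_eq_image J, Finset.prod_image (fun a _ b _ h => val_succ_injective h)]
  apply Finset.prod_congr rfl
  intro i _
  rw [d_eq]
  by_cases h : i ∈ eC n I
  · rw [if_pos ((mem_eC I i).mp h), if_pos h]
  · rw [if_neg (fun hc => h ((mem_eC I i).mpr hc)), if_neg h]

lemma bOrd_eq {n : ℕ} (I : Composition n) : bOrd I = KAux.bb (eC n I) := by
  rw [bOrd, Des_eq_image, Finset.sum_image (fun a _ b _ h => val_succ_injective h), KAux.bb]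
  apply Finset.sum_congr rfl
  intro i _
  congr 1
  omega

/-- `K_n(𝟏,T)` is invertible, and `K_n(Q,T)·K_n(𝟏,T)⁻¹` is upper triangular with respect to
the order `b(I) = ∑_{k ∈ Des I} 2^{n−1−k}` on compositions: its `(I,J)` entry vanishes
whenever `b(I) > b(J)`. -/
theorem KQT_mul_K1T_inv_upperTriangular {n : ℕ} (hn : 1 ≤ n) :
    (K1T n).det ≠ 0 ∧
    ∀ I J : Composition n, bOrd J < bOrd I → (KQT n * (K1T n)⁻¹) I J = 0 := by
  obtain ⟨hdet, U, hU, htri⟩ := KAux.main (n-1) qv tv (fun i => tv_ne_one (i+1))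
  have hdetK : (K1T n).det ≠ 0 := by
    rw [K1T_eq, Matrix.det_submatrix_equiv_self]
    exact hdet
  refine ⟨hdetK, ?_⟩
  intro I J hIJ
  have hM1unit : IsUnit (KAux.M1 (n-1) tv).det := isUnit_iff_ne_zero.mpr hdet
  have hinv : (K1T n)⁻¹ = ((KAux.M1 (n-1) tv)⁻¹).submatrix (eC n) (eC n) := by
    apply Matrix.inv_eq_right_inv
    rw [K1T_eq, Matrix.submatrix_mul_equiv _ _ _ (eC n) _,
      Matrix.mul_nonsing_inv _ hM1unit, Matrix.submatrix_one_equiv]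
  have hMQM1 : KAux.MQ (n-1) qv tv * (KAux.M1 (n-1) tv)⁻¹ = U := by
    rw [hU, Matrix.mul_assoc, Matrix.mul_nonsing_inv _ hM1unit, Matrix.mul_one]
  rw [KQT_eq, hinv, Matrix.submatrix_mul_equiv _ _ _ (eC n) _]
  rw [Matrix.submatrix_apply, hMQM1]
  apply htri
  rw [← bOrd_eq, ← bOrd_eq]
  exact hIJ
end
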